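/- For d ≥ 1, the super-operator Ψ₁ from d×d matrices to (d+1)×(d+1) matrices defined by letting Ψ₁[X] have (Tr(X)·I_d − Xᵀ)/(d+1) as its top-left d×d block, the scalar 2·Tr(X)/(d+1) in the bottom-right corner entry, and zeros elsewhere (where Xᵀ is the transpose of X) is a channel, i.e. it is completely positive and trace-preserving. -/

import Mathlib

open scoped Kronecker ComplexOrder Matrix

namespace ChannelDiscrimination

/-- The trace norm `Tr √(Aᴴ A)` of a complex square matrix. -/
noncomputable def traceNorm {ι : Type*} [Fintype ι] [DecidableEq ι]
    (A : Matrix ι ι ℂ) : ℝ :=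
  ((Matrix.posSemidef_conjTranspose_mul_self A).1.eigenvectorUnitary.1 *
    Matrix.diagonal (((↑) : ℝ → ℂ) ∘ (Real.sqrt ·) ∘ (Matrix.posSemidef_conjTranspose_mul_self A).1.eigenvalues) *
    (star (Matrix.posSemidef_conjTranspose_mul_self A).1.eigenvectorUnitary : Matrix ι ι ℂ)).trace.re

/-- A state: a positive semidefinite matrix of trace one. -/
def IsState {ι : Type*} [Fintype ι] (ρ : Matrix ι ι ℂ) : Prop :=
  ρ.PosSemidef ∧ ρ.trace = 1

/-- Separability of a bipartite matrix on `ℂ^m ⊗ ℂ^n`. -/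
def IsSeparable {m n : ℕ} (σ : Matrix (Fin m × Fin n) (Fin m × Fin n) ℂ) : Prop :=
  ∃ (N : ℕ) (p : Fin N → ℝ) (ρ : Fin N → Matrix (Fin m) (Fin m) ℂ)
    (τ : Fin N → Matrix (Fin n) (Fin n) ℂ),
    (∀ i, 0 ≤ p i) ∧ (∑ i, p i = 1) ∧ (∀ i, IsState (ρ i)) ∧ (∀ i, IsState (τ i)) ∧
    σ = ∑ i, (p i : ℂ) • (ρ i ⊗ₖ τ i)

/-- `Φ ⊗ id_n` for a super-operator `Φ` from `m×m` to `k×k` matrices. -/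
def tensorId {m k : ℕ} (n : ℕ)
    (Φ : Matrix (Fin m) (Fin m) ℂ →ₗ[ℂ] Matrix (Fin k) (Fin k) ℂ) :
    Matrix (Fin m × Fin n) (Fin m × Fin n) ℂ →ₗ[ℂ]
      Matrix (Fin k × Fin n) (Fin k × Fin n) ℂ where
  toFun M := Matrix.of fun p q => Φ (Matrix.of fun i j => M (i, p.2) (j, q.2)) p.1 q.1
  map_add' M N := by
    ext p q
    show Φ ((Matrix.of fun i j => M (i, p.2) (j, q.2)) +
        (Matrix.of fun i j => N (i, p.2) (j, q.2))) p.1 q.1 = _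
    rw [map_add]
    rfl
  map_smul' c M := by
    ext p q
    show Φ (c • (Matrix.of fun i j => M (i, p.2) (j, q.2))) p.1 q.1 = _
    rw [map_smul]
    rfl

/-- A positive super-operator. -/
def IsPositiveMap {m k : ℕ}
    (Φ : Matrix (Fin m) (Fin m) ℂ →ₗ[ℂ] Matrix (Fin k) (Fin k) ℂ) : Prop :=
  ∀ X : Matrix (Fin m) (Fin m) ℂ, X.PosSemidef → (Φ X).PosSemidef

/-- A trace-preserving super-operator. -/
def IsTracePreserving {m k : ℕ}
    (Φ : Matrix (Fin m) (Fin m) ℂ →ₗ[ℂ] Matrix (Fin k) (Fin k) ℂ) : Prop :=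
  ∀ X : Matrix (Fin m) (Fin m) ℂ, (Φ X).trace = X.trace

/-- A completely positive super-operator: `Φ ⊗ id_n` is positive for every `n`. -/
def IsCompletelyPositive {m k : ℕ}
    (Φ : Matrix (Fin m) (Fin m) ℂ →ₗ[ℂ] Matrix (Fin k) (Fin k) ℂ) : Prop :=
  ∀ (n : ℕ) (M : Matrix (Fin m × Fin n) (Fin m × Fin n) ℂ),
    M.PosSemidef → (tensorId n Φ M).PosSemidef

/-- A (quantum) channel: completely positive and trace-preserving. -/
def IsChannel {m k : ℕ}
    (Φ : Matrix (Fin m) (Fin m) ℂ →ₗ[ℂ] Matrix (Fin k) (Fin k) ℂ) : Prop :=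
  IsCompletelyPositive Φ ∧ IsTracePreserving Φ

/-- An entanglement-breaking channel. -/
def IsEntanglementBreaking {m k : ℕ}
    (Φ : Matrix (Fin m) (Fin m) ℂ →ₗ[ℂ] Matrix (Fin k) (Fin k) ℂ) : Prop :=
  IsChannel Φ ∧ ∀ (n : ℕ) (ρ : Matrix (Fin m × Fin n) (Fin m × Fin n) ℂ),
    IsState ρ → IsSeparable (tensorId n Φ ρ)

/-- `pad1 M c` is the `(k+1)×(k+1)` matrix with `M` as its top-left `k×k` block,
`c` in the bottom-right corner, and zeros elsewhere. -/
def pad1 {k : ℕ} (M : Matrix (Fin k) (Fin k) ℂ) (c : ℂ) :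
    Matrix (Fin (k + 1)) (Fin (k + 1)) ℂ :=
  Matrix.of fun a b =>
    Fin.lastCases (Fin.lastCases c (fun _ => 0) b)
      (fun i => Fin.lastCases 0 (fun j => M i j) b) a

/-- Partial transpose on the first tensor factor. -/
def ptransposeFst {d n : ℕ} (ρ : Matrix (Fin d × Fin n) (Fin d × Fin n) ℂ) :
    Matrix (Fin d × Fin n) (Fin d × Fin n) ℂ :=
  Matrix.of fun p q => ρ (q.1, p.2) (p.1, q.2)

/-!
A map `X ↦ ∑ₐ tₐ Kₐ X Kₐᴴ` with `tₐ ≥ 0` is completely positive, because its tensor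
extension is `M ↦ ∑ₐ tₐ (Kₐ ⊗ I) M (Kₐ ⊗ I)ᴴ`. `Ψ₁` is of this form: with matrix units `Eᵢⱼ`,
`∑ᵢⱼ (Eᵢⱼ - Eⱼᵢ) X (Eᵢⱼ - Eⱼᵢ)ᴴ = 2 (Tr X • I - Xᵀ)` produces the top-left block and
`∑ₖ E_{d,k} X E_{d,k}ᴴ = Tr X • E_{d,d}` the corner, with weights `1/(2(d+1))` and `2/(d+1)`.
-/

open Matrix

theorem tensorId_eq_sum_conj {m k n : ℕ} {ι : Type*} [Fintype ι]
    (Φ : Matrix (Fin m) (Fin m) ℂ →ₗ[ℂ] Matrix (Fin k) (Fin k) ℂ)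
    (K : ι → Matrix (Fin k) (Fin m) ℂ) (t : ι → ℝ)
    (hΦ : ∀ X, Φ X = ∑ a, t a • (K a * X * (K a)ᴴ))
    (M : Matrix (Fin m × Fin n) (Fin m × Fin n) ℂ) :
    tensorId n Φ M = ∑ a, t a • ((K a ⊗ₖ (1 : Matrix (Fin n) (Fin n) ℂ)) * M *
      (K a ⊗ₖ (1 : Matrix (Fin n) (Fin n) ℂ))ᴴ) := by
  ext ⟨a₁, a₂⟩ ⟨b₁, b₂⟩
  show Φ (Matrix.of fun i j => M (i, a₂) (j, b₂)) a₁ b₁ = _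
  simp [hΦ, Matrix.sum_apply, mul_apply, Fintype.sum_prod_type, one_apply,
    apply_ite (starRingEnd ℂ)]

theorem isCompletelyPositive_of_kraus {m k : ℕ} {ι : Type*} [Fintype ι]
    (Φ : Matrix (Fin m) (Fin m) ℂ →ₗ[ℂ] Matrix (Fin k) (Fin k) ℂ)
    (K : ι → Matrix (Fin k) (Fin m) ℂ) (t : ι → ℝ) (ht : ∀ a, 0 ≤ t a)
    (hΦ : ∀ X, Φ X = ∑ a, t a • (K a * X * (K a)ᴴ)) :
    IsCompletelyPositive Φ := fun n M hM => by
  rw [tensorId_eq_sum_conj Φ K t hΦ M]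
  exact posSemidef_sum _ fun a _ => (hM.mul_mul_conjTranspose_same _).smul (ht a)

theorem sum_conj_single_sub_single {n : Type*} [Fintype n] [DecidableEq n]
    (X : Matrix n n ℂ) :
    ∑ p : n × n, (single p.1 p.2 (1 : ℂ) - single p.2 p.1 1) * X *
      (single p.1 p.2 (1 : ℂ) - single p.2 p.1 1)ᴴ = (2 : ℂ) • (X.trace • 1 - Xᵀ) := by
  ext i j
  rcases eq_or_ne i j with rfl | hij
  · simp [sub_mul, mul_sub, Matrix.sum_apply, single_apply, trace, Fintype.sum_prod_type, ite_and]
    ring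
  · simp [sub_mul, mul_sub, Matrix.sum_apply, single_apply, Fintype.sum_prod_type, ite_and, hij]
    ring

theorem sum_conj_single_row {m n : Type*} [Fintype n] [DecidableEq m] [DecidableEq n] (r : m)
    (X : Matrix n n ℂ) :
    ∑ k, (single r k (1 : ℂ) : Matrix m n ℂ) * X * (single r k (1 : ℂ))ᴴ =
      X.trace • single r r (1 : ℂ) := by
  simp [trace, Finset.sum_smul, smul_single]

def topInclusion (k : ℕ) : Matrix (Fin (k + 1)) (Fin k) ℂ :=
  (1 : Matrix (Fin (k + 1)) (Fin (k + 1)) ℂ).submatrix id Fin.castSucc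

theorem pad1_eq_conj_add_single {k : ℕ} (M : Matrix (Fin k) (Fin k) ℂ) (c : ℂ) :
    pad1 M c = topInclusion k * M * (topInclusion k)ᴴ + single (Fin.last k) (Fin.last k) c := by
  ext a b
  induction a using Fin.lastCases <;> induction b using Fin.lastCases <;>
    simp [pad1, topInclusion, mul_apply, one_apply, Fin.castSucc_ne_last,
      (Fin.castSucc_ne_last _).symm]

theorem trace_pad1 {k : ℕ} (M : Matrix (Fin k) (Fin k) ℂ) (c : ℂ) :
    (pad1 M c).trace = M.trace + c := by
  simp [trace, pad1, Fin.sum_univ_castSucc]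

def psi1Kraus (d : ℕ) : Fin d × Fin d ⊕ Fin d → Matrix (Fin (d + 1)) (Fin d) ℂ :=
  Sum.elim (fun p => topInclusion d * (single p.1 p.2 (1 : ℂ) - single p.2 p.1 1))
    (fun k => single (Fin.last d) k 1)

noncomputable def psi1Weight (d : ℕ) : Fin d × Fin d ⊕ Fin d → ℝ :=
  Sum.elim (fun _ => (2 * ((d : ℝ) + 1))⁻¹) (fun _ => 2 / ((d : ℝ) + 1))

theorem psi1Weight_nonneg (d : ℕ) (a : Fin d × Fin d ⊕ Fin d) : 0 ≤ psi1Weight d a := by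
  cases a <;> simp only [psi1Weight, Sum.elim_inl, Sum.elim_inr] <;> positivity

theorem pad1_psi1_eq_sum_kraus {d : ℕ} (X : Matrix (Fin d) (Fin d) ℂ) :
    pad1 (((d : ℂ) + 1)⁻¹ • (X.trace • (1 : Matrix (Fin d) (Fin d) ℂ) - Xᵀ))
        (2 * X.trace / ((d : ℂ) + 1)) =
      ∑ a, psi1Weight d a • (psi1Kraus d a * X * (psi1Kraus d a)ᴴ) := by
  have hconj : ∀ A : Matrix (Fin d) (Fin d) ℂ, topInclusion d * A * X * (topInclusion d * A)ᴴ =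
      topInclusion d * (A * X * Aᴴ) * (topInclusion d)ᴴ := by
    intro A
    simp only [conjTranspose_mul, Matrix.mul_assoc]
  simp only [Fintype.sum_sum_type, psi1Kraus, psi1Weight, Sum.elim_inl, Sum.elim_inr, hconj,
    ← Finset.smul_sum, ← Matrix.sum_mul, ← Matrix.mul_sum, sum_conj_single_sub_single,
    sum_conj_single_row, pad1_eq_conj_add_single]
  congr 1
  · rw [Matrix.mul_smul, Matrix.smul_mul, Matrix.mul_smul, Matrix.smul_mul, ← Complex.coe_smul,
      smul_smul]
    congr 1
    push_cast
    field_simp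
  · rw [smul_single, smul_single, ← Complex.coe_smul, smul_eq_mul, smul_eq_mul]
    push_cast
    ring_nf

theorem trace_pad1_psi1 {d : ℕ} (X : Matrix (Fin d) (Fin d) ℂ) :
    (pad1 (((d : ℂ) + 1)⁻¹ • (X.trace • (1 : Matrix (Fin d) (Fin d) ℂ) - Xᵀ))
        (2 * X.trace / ((d : ℂ) + 1))).trace = X.trace := by
  rw [trace_pad1, trace_smul, trace_sub, trace_smul, trace_one, Fintype.card_fin,
    trace_transpose, smul_eq_mul, smul_eq_mul]
  have hd : (d : ℂ) + 1 ≠ 0 := by exact_mod_cast d.succ_ne_zero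
  field_simp
  ring

theorem Psi1_is_channel_general
    {d : ℕ}
    (Ψ₁ : Matrix (Fin d) (Fin d) ℂ →ₗ[ℂ] Matrix (Fin (d + 1)) (Fin (d + 1)) ℂ)
    (hΨ₁ : ∀ X : Matrix (Fin d) (Fin d) ℂ,
      Ψ₁ X = pad1 (((d : ℂ) + 1)⁻¹ • (X.trace • (1 : Matrix (Fin d) (Fin d) ℂ) - Xᵀ))
        (2 * X.trace / ((d : ℂ) + 1))) :
    IsChannel Ψ₁ :=
  ⟨isCompletelyPositive_of_kraus Ψ₁ (psi1Kraus d) (psi1Weight d) (psi1Weight_nonneg d)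
      fun X => by rw [hΨ₁, pad1_psi1_eq_sum_kraus],
    fun X => by rw [hΨ₁, trace_pad1_psi1]⟩

/-- For `d ≥ 1`, the super-operator
`Ψ₁[X] = pad1 ((Tr(X)·I_d − Xᵀ)/(d+1)) (2·Tr(X)/(d+1))` is a channel. -/
theorem Psi1_is_channel
    {d : ℕ} (hd : 1 ≤ d)
    (Ψ₁ : Matrix (Fin d) (Fin d) ℂ →ₗ[ℂ] Matrix (Fin (d + 1)) (Fin (d + 1)) ℂ)
    (hΨ₁ : ∀ X : Matrix (Fin d) (Fin d) ℂ,
      Ψ₁ X = pad1 (((d : ℂ) + 1)⁻¹ • (X.trace • (1 : Matrix (Fin d) (Fin d) ℂ) - Xᵀ))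
        (2 * X.trace / ((d : ℂ) + 1))) :
    IsChannel Ψ₁ :=
  Psi1_is_channel_general Ψ₁ hΨ₁

end ChannelDiscrimination
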